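/- If f : ℝⁿ → ℝ is convex, twice continuously differentiable, 1-coercive, and ∇²f(x) is positive definite for all x, then f* is also convex, twice differentiable, 1-coercive with positive definite Hessian everywhere, and ∇²f*(y) = [∇²f((∇f)⁻¹(y))]⁻¹ for all y ∈ ℝⁿ. -/

import Mathlib

/-!
The Hessian of `f` is positive definite, so `∇f` is strictly monotone and hence injective.
By 1-coercivity every function `x ↦ ⟪y, x⟫ - f x` attains its maximum, at a critical point,
where `∇f x = y`. So `∇f` is a bijection and `f* y = ⟪y, g y⟫ - f (g y)` with `g = (∇f)⁻¹`.
The inverse function theorem makes `g` differentiable with derivative the inverse of the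
Hessian, and the chain rule then gives `∇f* = g`, since `∇f (g y) = y`. Finally `f*` is
convex as a supremum of affine functions, and 1-coercive because
`f* y ≥ R ‖y‖ - max_{‖x‖ ≤ R} f` for every `R ≥ 0`.
-/

open Filter Set RealInnerProductSpace

noncomputable def fenchel {n : ℕ} (f : EuclideanSpace ℝ (Fin n) → ℝ)
    (y : EuclideanSpace ℝ (Fin n)) : ℝ :=
  sSup (Set.range fun x => ⟪y, x⟫ - f x)

def Coercive1 {n : ℕ} (f : EuclideanSpace ℝ (Fin n) → ℝ) : Prop :=
  Tendsto (fun x => f x / ‖x‖) (Filter.comap norm Filter.atTop) Filter.atTop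

open Function

section InnerProductSpace

variable {E : Type*} [NormedAddCommGroup E] [InnerProductSpace ℝ E]

theorem ContinuousLinearMap.injective_of_inner_pos {T : E →L[ℝ] E}
    (hT : ∀ v, v ≠ 0 → 0 < ⟪v, T v⟫) : Injective T :=
  (injective_iff_map_eq_zero T).2 fun v hv => by
    by_contra hv0
    simpa [hv] using hT v hv0

noncomputable def ContinuousLinearMap.toEquivOfInnerPos [FiniteDimensional ℝ E]
    (T : E →L[ℝ] E) (hT : ∀ v, v ≠ 0 → 0 < ⟪v, T v⟫) : E ≃L[ℝ] E :=
  (LinearEquiv.ofInjectiveEndo (T : E →ₗ[ℝ] E)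
    (T.injective_of_inner_pos hT)).toContinuousLinearEquiv

theorem ContinuousLinearEquiv.inner_symm_apply_pos (e : E ≃L[ℝ] E)
    (he : ∀ v, v ≠ 0 → 0 < ⟪v, e v⟫) (v : E) (hv : v ≠ 0) : 0 < ⟪v, e.symm v⟫ := by
  have hw : e.symm v ≠ 0 := by simpa using hv
  simpa [real_inner_comm] using he _ hw

theorem inner_sub_sub_pos_of_hasFDerivAt {F : E → E} {F' : E → E →L[ℝ] E}
    (hF : ∀ x, HasFDerivAt F (F' x) x) (hpos : ∀ x v, v ≠ 0 → 0 < ⟪v, F' x v⟫) {x z : E}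
    (hxz : x ≠ z) : 0 < ⟪F z - F x, z - x⟫ := by
  set v := z - x
  have hv : v ≠ 0 := sub_ne_zero.2 hxz.symm
  set φ : ℝ → ℝ := fun t => ⟪F (x + t • v), v⟫
  have hφ : ∀ t, HasDerivAt φ ⟪F' (x + t • v) v, v⟫ t := fun t => by
    have hline : HasDerivAt (fun s : ℝ => x + s • v) v t := by
      simpa using ((hasDerivAt_id t).smul_const v).const_add x
    simpa using ((hF _).comp_hasDerivAt t hline).inner ℝ (hasDerivAt_const t v)
  have hφ_mono : StrictMono φ := strictMono_of_deriv_pos fun t => by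
    rw [(hφ t).deriv, real_inner_comm]
    exact hpos _ v hv
  have h01 := sub_pos.2 (hφ_mono zero_lt_one)
  simpa [φ, v, inner_sub_left] using h01

theorem injective_of_hasFDerivAt_of_inner_pos {F : E → E} {F' : E → E →L[ℝ] E}
    (hF : ∀ x, HasFDerivAt F (F' x) x) (hpos : ∀ x v, v ≠ 0 → 0 < ⟪v, F' x v⟫) :
    Injective F := fun x z h => by
  by_contra hxz
  simpa [h] using (inner_sub_sub_pos_of_hasFDerivAt hF hpos hxz).ne'

theorem exists_forall_inner_sub_le [ProperSpace E] {f : E → ℝ} (hf : Continuous f)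
    (hcoer : Tendsto (fun x => f x / ‖x‖) (comap norm atTop) atTop) (y : E) :
    ∃ x, ∀ z, ⟪y, z⟫ - f z ≤ ⟪y, x⟫ - f x := by
  have hnorm : Tendsto (norm : E → ℝ) (comap norm atTop) atTop := tendsto_comap
  have hgrow : Tendsto (fun x => (f x / ‖x‖ - ‖y‖) * ‖x‖) (comap norm atTop) atTop :=
    (tendsto_atTop_add_const_right _ _ hcoer).atTop_mul_atTop₀ hnorm
  have htends : Tendsto (fun x => f x - ⟪y, x⟫) (cocompact E) atTop := by
    rw [← Metric.cobounded_eq_cocompact, ← comap_norm_atTop]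
    refine tendsto_atTop_mono' _ ?_ hgrow
    filter_upwards [hnorm.eventually_gt_atTop 0] with x hx
    rw [sub_mul, div_mul_cancel₀ _ hx.ne']
    linarith [real_inner_le_norm y x]
  have hcont : Continuous fun x => f x - ⟪y, x⟫ := by fun_prop
  obtain ⟨x, hx⟩ := hcont.exists_forall_le htends
  exact ⟨x, fun z => by linarith [hx z]⟩

variable [CompleteSpace E]

theorem HasGradientAt.eq_of_forall_inner_sub_le {f : E → ℝ} {x y g : E}
    (hf : HasGradientAt f g x) (hmax : ∀ z, ⟪y, z⟫ - f z ≤ ⟪y, x⟫ - f x) : g = y := by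
  have hmin : IsLocalMin (fun z => f z - ⟪y, z⟫) x :=
    Eventually.of_forall fun z => by linarith [hmax z]
  have hzero := hmin.hasFDerivAt_eq_zero (hf.hasFDerivAt.sub (innerSL ℝ y).hasFDerivAt)
  have h := congr($hzero (g - y))
  simp only [sub_apply, InnerProductSpace.toDual_apply_apply, innerSL_apply_apply,
    zero_apply, ← inner_sub_left] at h
  exact sub_eq_zero.1 (inner_self_eq_zero.1 h)

theorem HasFDerivAt.hasGradientAt_inner_sub_comp {f : E → ℝ} {g : E → E} {g' : E →L[ℝ] E}
    {y : E} (hg : HasFDerivAt g g' y) (hf : HasGradientAt f y (g y)) :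
    HasGradientAt (fun z => ⟪z, g z⟫ - f (g z)) (g y) y := by
  rw [hasGradientAt_iff_hasFDerivAt]
  refine (((hasFDerivAt_id y).inner ℝ hg).sub (hf.hasFDerivAt.comp y hg)).congr_fderiv ?_
  ext v
  simp [real_inner_comm]

end InnerProductSpace

section Fenchel

variable {n : ℕ} {f : EuclideanSpace ℝ (Fin n) → ℝ}

local notation "E" => EuclideanSpace ℝ (Fin n)

theorem fenchel_eq_of_forall_le {x y : E} (hx : ∀ z, ⟪y, z⟫ - f z ≤ ⟪y, x⟫ - f x) :
    fenchel f y = ⟪y, x⟫ - f x :=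
  IsGreatest.csSup_eq ⟨⟨x, rfl⟩, forall_mem_range.2 hx⟩

theorem le_fenchel {y : E} (hf : BddAbove (range fun x => ⟪y, x⟫ - f x)) (x : E) :
    ⟪y, x⟫ - f x ≤ fenchel f y :=
  le_csSup hf ⟨x, rfl⟩

theorem convexOn_fenchel (hf : ∀ y : E, BddAbove (range fun x => ⟪y, x⟫ - f x)) :
    ConvexOn ℝ univ (fenchel f) := by
  refine ⟨convex_univ, fun y _ z _ a b ha hb hab => csSup_le (range_nonempty _) ?_⟩
  rintro _ ⟨x, rfl⟩
  have hsplit : ⟪a • y + b • z, x⟫ - f x = a * (⟪y, x⟫ - f x) + b * (⟪z, x⟫ - f x) := by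
    rw [inner_add_left, real_inner_smul_left, real_inner_smul_left]
    linear_combination f x * hab
  change ⟪a • y + b • z, x⟫ - f x ≤ a * fenchel f y + b * fenchel f z
  rw [hsplit]
  gcongr
  exacts [le_fenchel (hf y) x, le_fenchel (hf z) x]

theorem mul_norm_sub_le_fenchel (hf : ∀ y : E, BddAbove (range fun x => ⟪y, x⟫ - f x))
    {R M : ℝ} (hR : 0 ≤ R) (hM : ∀ x ∈ Metric.closedBall (0 : E) R, f x ≤ M) (y : E) :
    R * ‖y‖ - M ≤ fenchel f y := by
  set x : E := (R * ‖y‖⁻¹) • y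
  have hx : ‖x‖ ≤ R := by
    rw [norm_smul, Real.norm_eq_abs, abs_of_nonneg (by positivity), mul_assoc]
    exact mul_le_of_le_one_right hR (inv_mul_le_one_of_le₀ le_rfl (norm_nonneg y))
  have hyx : ⟪y, x⟫ = R * ‖y‖ := by
    rw [real_inner_smul_right, real_inner_self_eq_norm_sq]
    rcases eq_or_ne ‖y‖ 0 with h | h
    · simp [h]
    · field_simp
  have := le_fenchel (hf y) x
  linarith [hM x (mem_closedBall_zero_iff.2 hx)]

theorem coercive1_fenchel (hf : Continuous f)
    (hbdd : ∀ y : E, BddAbove (range fun x => ⟪y, x⟫ - f x)) : Coercive1 (fenchel f) := by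
  refine tendsto_atTop.2 fun b => ?_
  obtain ⟨M, hM⟩ := (isCompact_closedBall (0 : E) (|b| + 1)).bddAbove_image hf.continuousOn
  filter_upwards [preimage_mem_comap (Ici_mem_atTop (max 1 M))] with y hy
  have hy : max 1 M ≤ ‖y‖ := hy
  have hlow := mul_norm_sub_le_fenchel hbdd (by positivity) (fun x hx => hM ⟨x, hx, rfl⟩) y
  rw [le_div_iff₀ (by linarith [le_max_left 1 M])]
  linarith [mul_le_mul_of_nonneg_right (le_abs_self b) (norm_nonneg y), le_max_right 1 M]

end Fenchel

theorem stmt6_general {n : ℕ} (f : EuclideanSpace ℝ (Fin n) → ℝ)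
    (f' : EuclideanSpace ℝ (Fin n) → EuclideanSpace ℝ (Fin n))
    (f'' : EuclideanSpace ℝ (Fin n) → EuclideanSpace ℝ (Fin n) →L[ℝ] EuclideanSpace ℝ (Fin n))
    (hdiff : ∀ x, HasGradientAt f (f' x) x)
    (hdiff2 : ∀ x, HasFDerivAt f' (f'' x) x)
    (hcont : Continuous f'')
    (hcoer : Coercive1 f)
    (hpos : ∀ x v, v ≠ 0 → 0 < ⟪v, f'' x v⟫) :
    ConvexOn ℝ Set.univ (fenchel f) ∧ Coercive1 (fenchel f) ∧
    ∃ (g : EuclideanSpace ℝ (Fin n) → EuclideanSpace ℝ (Fin n))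
      (g'' : EuclideanSpace ℝ (Fin n) → EuclideanSpace ℝ (Fin n) →L[ℝ] EuclideanSpace ℝ (Fin n)),
      (∀ y, HasGradientAt (fenchel f) (g y) y) ∧
      (∀ y, HasFDerivAt g (g'' y) y) ∧
      (∀ y v, v ≠ 0 → 0 < ⟪v, g'' y v⟫) ∧
      (∀ y v, f'' (Function.invFun f' y) (g'' y v) = v) ∧
      (∀ y v, g'' y (f'' (Function.invFun f' y) v) = v) := by
  have hfc : Continuous f :=
    continuous_iff_continuousAt.2 fun x => (hdiff x).differentiableAt.continuousAt
  have hmax := exists_forall_inner_sub_le hfc hcoer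
  have hbdd : ∀ y, BddAbove (range fun x => ⟪y, x⟫ - f x) := fun y =>
    let ⟨_, hx⟩ := hmax y; ⟨_, forall_mem_range.2 hx⟩
  have hinj : Injective f' := injective_of_hasFDerivAt_of_inner_pos hdiff2 hpos
  have hsurj : Surjective f' := fun y =>
    let ⟨x, hx⟩ := hmax y; ⟨x, (hdiff x).eq_of_forall_inner_sub_le hx⟩
  set g := invFun f'
  have hfg : ∀ y, f' (g y) = y := rightInverse_invFun hsurj
  have hgf : ∀ x, g (f' x) = x := leftInverse_invFun hinj
  have hfenchel : fenchel f = fun y => ⟪y, g y⟫ - f (g y) := by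
    ext y
    obtain ⟨x, hx⟩ := hmax y
    obtain rfl := (hdiff x).eq_of_forall_inner_sub_le hx
    rw [hgf]
    exact fenchel_eq_of_forall_le hx
  set H := fun x => (f'' x).toEquivOfInnerPos (hpos x)
  have hg : ∀ y, HasFDerivAt g ((H (g y)).symm : _ →L[ℝ] _) y := fun y => by
    have hstrict : HasStrictFDerivAt f' (H (g y) : _ →L[ℝ] _) (g y) :=
      hasStrictFDerivAt_of_hasFDerivAt_of_continuousAt (.of_forall hdiff2) hcont.continuousAt
    simpa only [hfg] using (hstrict.to_local_left_inverse (.of_forall hgf)).hasFDerivAt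
  refine ⟨convexOn_fenchel hbdd, coercive1_fenchel hfc hbdd, g, fun y => (H (g y)).symm,
    fun y => ?_, hg, fun y => (H (g y)).inner_symm_apply_pos (hpos (g y)),
    fun y => (H (g y)).apply_symm_apply, fun y => (H (g y)).symm_apply_apply⟩
  have hgrad : HasGradientAt f y (g y) := by simpa only [hfg] using hdiff (g y)
  rw [hfenchel]
  exact (hg y).hasGradientAt_inner_sub_comp hgrad

theorem stmt6 {n : ℕ} (f : EuclideanSpace ℝ (Fin n) → ℝ)
    (f' : EuclideanSpace ℝ (Fin n) → EuclideanSpace ℝ (Fin n))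
    (f'' : EuclideanSpace ℝ (Fin n) → EuclideanSpace ℝ (Fin n) →L[ℝ] EuclideanSpace ℝ (Fin n))
    (hconv : ConvexOn ℝ Set.univ f)
    (hdiff : ∀ x, HasGradientAt f (f' x) x)
    (hdiff2 : ∀ x, HasFDerivAt f' (f'' x) x)
    (hcont : Continuous f'')
    (hcoer : Coercive1 f)
    (hpos : ∀ x v, v ≠ 0 → 0 < ⟪v, f'' x v⟫) :
    ConvexOn ℝ Set.univ (fenchel f) ∧ Coercive1 (fenchel f) ∧
    ∃ (g : EuclideanSpace ℝ (Fin n) → EuclideanSpace ℝ (Fin n))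
      (g'' : EuclideanSpace ℝ (Fin n) → EuclideanSpace ℝ (Fin n) →L[ℝ] EuclideanSpace ℝ (Fin n)),
      (∀ y, HasGradientAt (fenchel f) (g y) y) ∧
      (∀ y, HasFDerivAt g (g'' y) y) ∧
      (∀ y v, v ≠ 0 → 0 < ⟪v, g'' y v⟫) ∧
      (∀ y v, f'' (Function.invFun f' y) (g'' y v) = v) ∧
      (∀ y v, g'' y (f'' (Function.invFun f' y) v) = v) :=
  stmt6_general f f' f'' hdiff hdiff2 hcont hcoer hpos
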